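/- Let f ∈ BV(Q(0,1)) satisfy the NCBV condition and let ε > 0, and let F̃_ε be the finite union of squares provided by the isolation lemma (so that |D^a f|(F̃_ε) ≤ ε|D^a f|(Q(0,1)) and |D^s f|(Q(0,1) \ F̃_ε) ≤ ε|D^s f|(Q(0,1)), with the bound ε²|D^a f|(Q(0,1)) when |D^a f|(Q(0,1)) > 0). Then there exists α₀ with 0 < α₀ < ε such that for any 0 < α ≤ α₀ there exists K = K(ε,α) ∈ ℕ such that, dividing Q(0,1) into the 2^{2K} K-dyadic squares and letting F_{ε,K} be the collection of K-dyadic squares which intersect F̃_ε or have a neighbouring K-dyadic square intersecting F̃_ε, and F̃_{ε,K} their union: (1) |D^a f|(F̃_{ε,K}) ≤ 2ε|D^a f|(Q(0,1)); and (2) |D^s f|(Q(0,1) \ F̃_{ε,K}) ≤ ε|D^s f|(Q(0,1)), and if |D^a f|(Q(0,1)) > 0 then also |D^s f|(Q(0,1) \ F̃_{ε,K}) ≤ ε²|D^a f|(Q(0,1)). -/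

import Mathlib

open MeasureTheory Set Filter Metric
open scoped ENNReal Topology RealInnerProductSpace NNReal

noncomputable section

/-- The Euclidean plane `ℝ²`. -/
abbrev E2 : Type := EuclideanSpace ℝ (Fin 2)

/-- The real inner product on `ℝ²`. -/
def rinner (x y : E2) : ℝ := ⟪x, y⟫

/-- The point of `ℝ²` with coordinates `x`, `y`. -/
def pt (x y : ℝ) : E2 := (WithLp.equiv 2 (Fin 2 → ℝ)).symm ![x, y]

/-- The open square `Q(c,r)` centred at `c` with side `2r`. -/
def osq (c : E2) (r : ℝ) : Set E2 := {p : E2 | ∀ i, |p i - c i| < r}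

/-- The closed square centred at `c` with side `2r`. -/
def csq (c : E2) (r : ℝ) : Set E2 := {p : E2 | ∀ i, |p i - c i| ≤ r}

/-- The unit square `Q(0,1) = (-1,1)²`. -/
def Q01 : Set E2 := osq 0 1

/-- First coordinate vector. -/
def e₀ : E2 := EuclideanSpace.single 0 1
/-- Second coordinate vector. -/
def e₁ : E2 := EuclideanSpace.single 1 1

/-- The rank-one matrix (tensor product) `u ⊗ v`, viewed as the linear map
`w ↦ ⟪v, w⟫ • u`. -/
def tensor (u v : E2) : E2 →L[ℝ] E2 := (innerSL ℝ v).smulRight u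

/-- A (representative of a) planar `BV` map on an open set `Ω ⊆ ℝ²`:  an integrable map `f`
together with a finite measure `var = |Df|` (the total variation of the distributional
derivative) carried by `Ω`, and the polar density `g` (with `‖g‖ = 1` `|Df|`-a.e. and
`Df = g |Df|`), linked to `f` by the integration-by-parts formula defining the
distributional derivative. -/
structure BVMap (Ω : Set E2) where
  f : E2 → E2
  integrable : MeasureTheory.IntegrableOn f Ω MeasureTheory.volume
  var : Measure E2
  var_finite : IsFiniteMeasure var
  var_outside : var Ωᶜ = 0
  g : E2 → (E2 →L[ℝ] E2)
  g_meas : AEStronglyMeasurable g var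
  g_norm : ∀ᵐ x ∂var, ‖g x‖ = 1
  int_by_parts : ∀ φ : E2 → ℝ, ContDiff ℝ 1 φ → HasCompactSupport φ →
    tsupport φ ⊆ Ω → ∀ (i j : Fin 2),
      ∫ x in Ω, f x i * (fderiv ℝ φ x (EuclideanSpace.single j 1)) ∂volume
        = - ∫ x, φ x * (g x (EuclideanSpace.single j 1) i) ∂var

namespace BVMap

variable {Ω : Set E2}

/-- The total variation `|D^a f|` of the absolutely continuous part of `Df`. -/
def varA (F : BVMap Ω) : Measure E2 := volume.withDensity (F.var.rnDeriv volume)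

/-- The total variation `|D^s f|` of the singular part of `Df`. -/
def varS (F : BVMap Ω) : Measure E2 := F.var.singularPart volume

/-- The approximate differential `∇f` of `f` (the density of `D^a f` w.r.t. Lebesgue
measure). -/
def aDeriv (F : BVMap Ω) (x : E2) : E2 →L[ℝ] E2 :=
  ((F.var.rnDeriv volume x).toReal) • F.g x

/-- The total variation `|⟨Df, v⟩|(A)` of the directional derivative measure
`⟨Df, v⟩ = (g v)|Df|` on `A`. -/
def dirVar (F : BVMap Ω) (v : E2) (A : Set E2) : ℝ≥0∞ := ∫⁻ x in A, ‖F.g x v‖₊ ∂F.var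

/-- `r⁻¹ |Df|(Q(X,r)) → 0` as `r → 0⁺`. -/
def SmallDeriv (F : BVMap Ω) (X : E2) : Prop :=
  Tendsto (fun r : ℝ => F.var (osq X r) / ENNReal.ofReal r) (𝓝[>] 0) (𝓝 0)

end BVMap

/-- `x` is an approximate jump point of `f` with one-sided limits `a`, `b` and
direction `ν`. -/
def ApproxJumpAt (f : E2 → E2) (x a b ν : E2) : Prop :=
  ‖ν‖ = 1 ∧ a ≠ b ∧
  Tendsto (fun r : ℝ => ⨍ y in {y ∈ ball x r | 0 < rinner (y - x) ν}, ‖f y - a‖ ∂volume)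
    (𝓝[>] 0) (𝓝 0) ∧
  Tendsto (fun r : ℝ => ⨍ y in {y ∈ ball x r | rinner (y - x) ν < 0}, ‖f y - b‖ ∂volume)
    (𝓝[>] 0) (𝓝 0)

/-- The approximate jump set `J_f` of `f`. -/
def Jset (f : E2 → E2) : Set E2 := {x | ∃ a b ν, ApproxJumpAt f x a b ν}

/-- `x` is a Lebesgue point of the jump part density `(f⁺-f⁻) ⊗ ν` with respect to
`H¹` restricted to `S` (here `jp, jm, ν` denote a choice of the jump data `f⁺, f⁻, ν`). -/
def JumpLebesguePointOn (S : Set E2) (jp jm ν : E2 → E2) (x : E2) : Prop :=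
  Tendsto (fun r : ℝ =>
      (∫ y in S ∩ ball x r,
          ‖tensor (jp y - jm y) (ν y) - tensor (jp x - jm x) (ν x)‖ ∂(μH[1])) / r)
    (𝓝[>] 0) (𝓝 0)

/-- A finitely piecewise linear injective curve `γ : [0,1] → ℝ²`, with its breakpoints
`t 0 = 0 < t 1 < ⋯ < t n = 1`. -/
structure PLCurve where
  n : ℕ
  γ : ℝ → E2
  t : Fin (n + 1) → ℝ
  t_mono : StrictMono t
  t_first : t 0 = 0
  t_last : t (Fin.last n) = 1
  affine : ∀ i : Fin n, ∀ s ∈ Icc (t i.castSucc) (t i.succ),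
    γ s = γ (t i.castSucc)
      + ((s - t i.castSucc) / (t i.succ - t i.castSucc)) • (γ (t i.succ) - γ (t i.castSucc))
  inj : InjOn γ (Icc 0 1)

/-- The image of a piecewise linear curve. -/
def PLCurve.im (c : PLCurve) : Set E2 := c.γ '' Icc 0 1

/-- The set covered by a grid of piecewise linear curves. -/
def gridSet {K : ℕ} (Γ : Fin K → PLCurve) : Set E2 := ⋃ i, (Γ i).im

/-- The grid `Γ` (a finite union of piecewise linear injective curves inside `Q(0,1)`,
any two meeting in at most one point) is admissible for `f`:  `f ∘ γᵢ` is one-dimensional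
`BV`, `f⌉Γ` is continuous at every breakpoint and every intersection point, and
`r⁻¹|Df|(Q(X,r)) → 0` at all those points. -/
def Admissible (F : BVMap Q01) {K : ℕ} (Γ : Fin K → PLCurve) : Prop :=
  (∀ i, MapsTo (Γ i).γ (Icc 0 1) Q01) ∧
  (∀ i j, i ≠ j → ((Γ i).im ∩ (Γ j).im).Subsingleton) ∧
  (∀ i, BoundedVariationOn (F.f ∘ (Γ i).γ) (Ioo 0 1)) ∧
  (∀ i (k : Fin ((Γ i).n + 1)),
    ContinuousWithinAt F.f (gridSet Γ) ((Γ i).γ ((Γ i).t k)) ∧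
      F.SmallDeriv ((Γ i).γ ((Γ i).t k))) ∧
  (∀ i j, i ≠ j → ∀ X ∈ (Γ i).im ∩ (Γ j).im,
    ContinuousWithinAt F.f (gridSet Γ) X ∧ F.SmallDeriv X)

/-- Full vertical segment `{x} × [-1,1]` of `Q(0,1)`. -/
def vline (x : ℝ) : Set E2 := {p : E2 | p 0 = x ∧ p 1 ∈ Icc (-1 : ℝ) 1}
/-- Full horizontal segment `[-1,1] × {y}` of `Q(0,1)`. -/
def hline (y : ℝ) : Set E2 := {p : E2 | p 1 = y ∧ p 0 ∈ Icc (-1 : ℝ) 1}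

/-- `jp, jm, ν` are jump data for `f` on the grid `Γ`, and every jump point of `f` on `Γ`
is a Lebesgue point of `(f⁺-f⁻) ⊗ ν` with respect to `H¹⌉J_f`. -/
def GridJumpData (F : BVMap Q01) {K : ℕ} (Γ : Fin K → PLCurve) (jp jm ν : E2 → E2) : Prop :=
  ∀ z ∈ gridSet Γ ∩ Jset F.f,
    ApproxJumpAt F.f z (jp z) (jm z) (ν z) ∧ JumpLebesguePointOn (Jset F.f) jp jm ν z

/-- A good straight grid for `f`: an admissible grid made of full vertical and horizontal
segments, on which every jump point of `f` is a Lebesgue point of `(f⁺-f⁻) ⊗ ν` with respect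
to `H¹⌉J_f`, the jump direction never being orthogonal to the grid line through the point. -/
def GoodStraightGrid (F : BVMap Q01) {K : ℕ} (Γ : Fin K → PLCurve) : Prop :=
  Admissible F Γ ∧
  (∀ i, (∃ x, (Γ i).im = vline x) ∨ (∃ y, (Γ i).im = hline y)) ∧
  ∃ jp jm ν : E2 → E2, GridJumpData F Γ jp jm ν ∧
    (∀ i x, (Γ i).im = vline x → ∀ z ∈ (Γ i).im ∩ Jset F.f, rinner e₁ (ν z) ≠ 0) ∧
    (∀ i y, (Γ i).im = hline y → ∀ z ∈ (Γ i).im ∩ Jset F.f, rinner e₀ (ν z) ≠ 0)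

/-- A good non-straight grid for `f`: an admissible grid on which every jump point of `f`
is a Lebesgue point of `(f⁺-f⁻) ⊗ ν` with respect to `H¹⌉J_f`, and the tangent `γᵢ'(t)`
exists and is not orthogonal to the jump direction at every jump point. -/
def GoodNonStraightGrid (F : BVMap Q01) {K : ℕ} (Γ : Fin K → PLCurve) : Prop :=
  Admissible F Γ ∧
  ∃ jp jm ν : E2 → E2, GridJumpData F Γ jp jm ν ∧
    ∀ i, ∀ s ∈ Icc (0:ℝ) 1, (Γ i).γ s ∈ Jset F.f →
      ∃ d : E2, HasDerivAt (Γ i).γ d s ∧ rinner d (ν ((Γ i).γ s)) ≠ 0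

/-- `h` is the geometric representative of `f` along the curve `γ` (defined on `[0,1]`):
denoting by `Y t`, `Z t` the one-sided limits of `f ∘ γ` at `t`, and by
`l t`, `L t` the variations of `f ∘ γ` on `[0,t)`, `[0,t]`, the filled-in curve `h̃`
parametrizes the segment `[Y t, Z t]` at constant speed on `[l t + t, L t + t]` and
`h (γ t) = h̃ ((1 + L 1) t)`. -/
def IsGeomRepOn (f : E2 → E2) (γ : ℝ → E2) (h : E2 → E2) : Prop :=
  ∃ (Y Z ht : ℝ → E2),
    (∀ t ∈ Ioc (0:ℝ) 1, Tendsto (f ∘ γ) (𝓝[<] t) (𝓝 (Y t))) ∧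
    (∀ t ∈ Ico (0:ℝ) 1, Tendsto (f ∘ γ) (𝓝[>] t) (𝓝 (Z t))) ∧
    (∀ t ∈ Icc (0:ℝ) 1, ∀ θ ∈ Icc (0:ℝ) 1,
      ht ((eVariationOn (f ∘ γ) (Ico 0 t)).toReal + t
          + θ * ((eVariationOn (f ∘ γ) (Icc 0 t)).toReal
              - (eVariationOn (f ∘ γ) (Ico 0 t)).toReal))
        = Y t + θ • (Z t - Y t)) ∧
    (∀ t ∈ Icc (0:ℝ) 1, h (γ t) = ht ((1 + (eVariationOn (f ∘ γ) (Icc 0 1)).toReal) * t))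

/-- `h` is the geometric representative of `f` on the grid `Γ`. -/
def IsGeomRep (F : BVMap Q01) {K : ℕ} (Γ : Fin K → PLCurve) (h : E2 → E2) : Prop :=
  ∀ i, IsGeomRepOn F.f (Γ i).γ h

/-- The no-crossing `BV` condition: on every good straight grid, the geometric
representative of `f` can be uniformly approximated by continuous injective maps. -/
def NCBV (F : BVMap Q01) : Prop :=
  ∀ σ : ℝ, 0 < σ → ∀ (K : ℕ) (Γ : Fin K → PLCurve), GoodStraightGrid F Γ →
    ∀ h : E2 → E2, IsGeomRep F Γ h →
      ∃ H : E2 → E2, ContinuousOn H (gridSet Γ) ∧ InjOn H (gridSet Γ) ∧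
        ∀ x ∈ gridSet Γ, ‖h x - H x‖ < σ

/-- The no-crossing `BV⁺` condition: on every good non-straight grid, the geometric
representative of `f` can be uniformly approximated by continuous injective maps. -/
def NCBVplus (F : BVMap Q01) : Prop :=
  ∀ σ : ℝ, 0 < σ → ∀ (K : ℕ) (Γ : Fin K → PLCurve), GoodNonStraightGrid F Γ →
    ∀ h : E2 → E2, IsGeomRep F Γ h →
      ∃ H : E2 → E2, ContinuousOn H (gridSet Γ) ∧ InjOn H (gridSet Γ) ∧
        ∀ x ∈ gridSet Γ, ‖h x - H x‖ < σ

/-- The matrix-valued measure `Df` evaluated on the set `A`. -/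
def DfSet (F : BVMap Q01) (A : Set E2) : E2 →L[ℝ] E2 := ∫ x in A, F.g x ∂F.var

/-- The matrix-valued measure `D^a f` evaluated on the set `A`. -/
def DafSet (F : BVMap Q01) (A : Set E2) : E2 →L[ℝ] E2 :=
  ∫ x in A, ((F.var.rnDeriv volume x).toReal) • F.g x ∂volume

/-- The total variation on `S` of a finitely additive matrix-valued set function, as the
supremum over finite disjoint families of measurable subsets of `S`. -/
def tvOn (m : Set E2 → (E2 →L[ℝ] E2)) (S : Set E2) : ℝ≥0∞ :=
  ⨆ (n : ℕ) (A : Fin n → Set E2) (_ : ∀ i, MeasurableSet (A i) ∧ A i ⊆ S)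
    (_ : Pairwise fun i j => Disjoint (A i) (A j)),
      ENNReal.ofReal (∑ i, ‖m (A i)‖)

/-- Area-strict convergence `f_k → f` on `Q(0,1)`:  `L¹` convergence, together with a
decomposition `Df_k = μ_k + ν_k` (as matrix-valued measures, here represented by densities
`m k`, `s k` with respect to finite measures `lam k`) such that `|μ_k - D^a f|(Q(0,1)) → 0`
and `|ν_k|(Q(0,1)) → |D^s f|(Q(0,1))`. -/
def AreaStrict (Fk : ℕ → BVMap Q01) (F : BVMap Q01) : Prop :=
  Tendsto (fun k => ∫ x in Q01, ‖(Fk k).f x - F.f x‖ ∂volume) atTop (𝓝 0) ∧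
  ∃ (lam : ℕ → Measure E2) (m s : ℕ → E2 → (E2 →L[ℝ] E2)),
    (∀ k, IsFiniteMeasure (lam k)) ∧
    (∀ k, Integrable (m k) (lam k)) ∧ (∀ k, Integrable (s k) (lam k)) ∧
    (∀ k (A : Set E2), MeasurableSet A →
      (∫ x in A, m k x ∂(lam k)) + (∫ x in A, s k x ∂(lam k)) = DfSet (Fk k) A) ∧
    Tendsto (fun k => tvOn (fun A => (∫ x in A, m k x ∂(lam k)) - DafSet F A) Q01)
      atTop (𝓝 0) ∧
    Tendsto (fun k => ∫⁻ x in Q01, ‖s k x‖₊ ∂(lam k)) atTop (𝓝 ((F.varS) Q01))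

/-- Weak `BV` convergence `f_k → f` on `Q(0,1)`: `L¹` convergence together with weak*
convergence of the derivative measures `Df_k → Df`. -/
def WeakBVTendsto (Fk : ℕ → BVMap Q01) (F : BVMap Q01) : Prop :=
  Tendsto (fun k => ∫ x in Q01, ‖(Fk k).f x - F.f x‖ ∂volume) atTop (𝓝 0) ∧
  ∀ φ : E2 → ℝ, Continuous φ → HasCompactSupport φ → tsupport φ ⊆ Q01 →
    ∀ i j : Fin 2,
      Tendsto (fun k => ∫ x, φ x * ((Fk k).g x (EuclideanSpace.single j 1) i) ∂(Fk k).var)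
        atTop (𝓝 (∫ x, φ x * (F.g x (EuclideanSpace.single j 1) i) ∂F.var))

/-- The `m`-strict energy `|D₁ f|(Q(0,1)) + |D₂ f|(Q(0,1))`. -/
def MStrictEnergy (F : BVMap Q01) : ℝ≥0∞ := F.dirVar e₀ Q01 + F.dirVar e₁ Q01

/-- `F` is a diffeomorphism of `Q(0,1)` onto itself equal to the identity on the
boundary. -/
def IsDiffeoQ (F : BVMap Q01) : Prop :=
  MapsTo F.f Q01 Q01 ∧ (∀ x ∈ frontier Q01, F.f x = x) ∧
  ContDiffOn ℝ 1 F.f Q01 ∧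
  ∃ Finv : E2 → E2, MapsTo Finv Q01 Q01 ∧ ContDiffOn ℝ 1 Finv Q01 ∧
    (∀ x ∈ Q01, Finv (F.f x) = x) ∧ (∀ y ∈ Q01, F.f (Finv y) = y)

/-- `F` is a homeomorphism of `Q(0,1)` onto itself equal to the identity on the
boundary. -/
def IsHomeoQ (F : BVMap Q01) : Prop :=
  MapsTo F.f Q01 Q01 ∧ (∀ x ∈ frontier Q01, F.f x = x) ∧
  ContinuousOn F.f Q01 ∧
  ∃ Finv : E2 → E2, MapsTo Finv Q01 Q01 ∧ ContinuousOn Finv Q01 ∧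
    (∀ x ∈ Q01, Finv (F.f x) = x) ∧ (∀ y ∈ Q01, F.f (Finv y) = y)

/-- The centre of the `K`-dyadic square of `Q(0,1)` with indices `a`, `b`. -/
def dyCenter (K : ℕ) (a b : Fin (2 ^ K)) : E2 :=
  pt (-1 + (2 * (a : ℝ) + 1) * (2 : ℝ) ^ (-(K : ℤ)))
     (-1 + (2 * (b : ℝ) + 1) * (2 : ℝ) ^ (-(K : ℤ)))

/-- The (closed) `K`-dyadic square of `Q(0,1)` with indices `a`, `b`; its side is
`2 · 2^{-K}`. -/
def dySq (K : ℕ) (a b : Fin (2 ^ K)) : Set E2 :=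
  csq (dyCenter K a b) ((2 : ℝ) ^ (-(K : ℤ)))

/-- The `K`-dyadic square with indices `a`, `b` intersects `T` or has a neighbouring
(touching) `K`-dyadic square intersecting `T`; this is the collection `F_{ε,K}` when
`T = F̃_ε`. -/
def InNearFam (K : ℕ) (T : Set E2) (a b : Fin (2 ^ K)) : Prop :=
  (dySq K a b ∩ T).Nonempty ∨
    ∃ a' b' : Fin (2 ^ K), (dySq K a' b' ∩ dySq K a b).Nonempty ∧ (dySq K a' b' ∩ T).Nonempty

/-- The union `F̃_{ε,K}` of the squares of the collection `F_{ε,K}`. -/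
def nearFamSet (K : ℕ) (T : Set E2) : Set E2 :=
  ⋃ (a : Fin (2 ^ K)) (b : Fin (2 ^ K)) (_ : InNearFam K T a b), dySq K a b


/-! Every `K`-dyadic enlargement `F̃_{ε,K}` contains `F̃_ε ∩ Q(0,1)`, so the bounds on `|D^s f|`
pass from `F̃_ε` to `F̃_{ε,K}` for every `K`. On the other hand `F̃_{ε,K}` lies in the closed
`6 · 2^{-K}`-neighbourhood of `F̃_ε`, whose `|D^a f|`-measure tends to `|D^a f|(closure F̃_ε)`
as `K → ∞`. The boundary of a finite union of squares is Lebesgue-null and `|D^a f|` is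
absolutely continuous, so this limit is `|D^a f|(F̃_ε) ≤ ε |D^a f|(Q(0,1))`, and the bound
`2ε |D^a f|(Q(0,1))` holds for `K` large (trivially if `|D^a f|(Q(0,1)) = 0`). -/

theorem closure_iUnion_ae_eq_of_convex {E : Type*} [NormedAddCommGroup E] [NormedSpace ℝ E]
    [MeasurableSpace E] [BorelSpace E] [FiniteDimensional ℝ E] (μ : Measure E)
    [μ.IsAddHaarMeasure] {ι : Type*} [Finite ι] {s : ι → Set E} (hs : ∀ i, Convex ℝ (s i)) :
    closure (⋃ i, s i) =ᵐ[μ] ⋃ i, s i := by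
  rw [closure_iUnion_of_finite]
  exact Filter.EventuallyEq.countable_iUnion fun i =>
    closure_ae_eq_of_null_frontier ((hs i).addHaar_frontier μ)

theorem convex_osq (c : E2) (r : ℝ) : Convex ℝ (osq c r) := by
  have : osq c r = ⋂ i, EuclideanSpace.proj i ⁻¹' Ioo (c i - r) (c i + r) := by
    ext p
    simp only [osq, mem_iInter, mem_preimage, mem_Ioo, abs_lt]
    exact forall_congr' fun i => by
      change _ ↔ _ < p i ∧ p i < _
      constructor <;> rintro ⟨h, h'⟩ <;> constructor <;> linarith
  rw [this]
  exact convex_iInter fun i => (convex_Ioo _ _).linear_preimage (EuclideanSpace.proj i).toLinearMap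

theorem dist_le_of_mem_csq {c p q : E2} {r : ℝ} (hp : p ∈ csq c r) (hq : q ∈ csq c r) :
    dist p q ≤ 3 * r := by
  have hcoord : ∀ i, dist (p i) (q i) ≤ 2 * r := fun i =>
    (dist_triangle_right _ _ (c i)).trans <| by
      rw [Real.dist_eq, Real.dist_eq]; linarith [hp i, hq i]
  have hr : 0 ≤ r := (abs_nonneg _).trans (hp 0)
  rw [EuclideanSpace.dist_eq, Fin.sum_univ_two, Real.sqrt_le_left (by positivity)]
  nlinarith [hcoord 0, hcoord 1, dist_nonneg (x := p 0) (y := q 0),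
    dist_nonneg (x := p 1) (y := q 1)]

theorem exists_dyadic_index (K : ℕ) {x : ℝ} (hx : x ∈ Ico (-1 : ℝ) 1) :
    ∃ a : Fin (2 ^ K),
      |x - (-1 + (2 * (a : ℝ) + 1) * (2 : ℝ) ^ (-(K : ℤ)))| ≤ (2 : ℝ) ^ (-(K : ℤ)) := by
  have hN : (0 : ℝ) < 2 ^ K := by positivity
  set t := (x + 1) / 2 * 2 ^ K with ht
  have ht0 : 0 ≤ t := by nlinarith [hx.1]
  have htN : t < 2 ^ K := by nlinarith [hx.2]
  refine ⟨⟨⌊t⌋₊, (Nat.floor_lt ht0).mpr (by exact_mod_cast htN)⟩, ?_⟩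
  have hlo := Nat.floor_le ht0
  have hhi := Nat.lt_floor_add_one t
  rw [zpow_neg, zpow_natCast, abs_le]
  constructor
  · rw [← sub_nonneg]; field_simp; nlinarith
  · rw [← sub_nonneg]; field_simp; nlinarith

theorem exists_mem_dySq (K : ℕ) {x : E2} (hx : x ∈ Q01) : ∃ a b : Fin (2 ^ K), x ∈ dySq K a b := by
  have hcoord : ∀ i, x i ∈ Ico (-1 : ℝ) 1 := fun i => by
    have := hx i
    simp only [PiLp.zero_apply, sub_zero, abs_lt] at this
    exact ⟨this.1.le, this.2⟩
  obtain ⟨a, ha⟩ := exists_dyadic_index K (hcoord 0)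
  obtain ⟨b, hb⟩ := exists_dyadic_index K (hcoord 1)
  refine ⟨a, b, fun i => ?_⟩
  fin_cases i
  · simpa [dyCenter, pt] using ha
  · simpa [dyCenter, pt] using hb

theorem Q01_diff_nearFamSet_subset (K : ℕ) (T : Set E2) : Q01 \ nearFamSet K T ⊆ Q01 \ T := by
  rintro x ⟨hxQ, hxK⟩
  refine ⟨hxQ, fun hxT => hxK ?_⟩
  obtain ⟨a, b, hx⟩ := exists_mem_dySq K hxQ
  exact mem_iUnion₂.mpr ⟨a, b, mem_iUnion.mpr ⟨Or.inl ⟨x, hx, hxT⟩, hx⟩⟩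

theorem nearFamSet_subset_cthickening (K : ℕ) (T : Set E2) :
    nearFamSet K T ⊆ cthickening (6 * (2 : ℝ) ^ (-(K : ℤ))) T := by
  intro x hx
  simp only [nearFamSet, mem_iUnion] at hx
  obtain ⟨a, b, hnear, hx⟩ := hx
  have hpos : (0 : ℝ) < 2 ^ (-(K : ℤ)) := by positivity
  rcases hnear with ⟨y, hy, hyT⟩ | ⟨a', b', ⟨y, hy', hy⟩, ⟨z, hz, hzT⟩⟩
  · exact mem_cthickening_of_dist_le x y _ T hyT (by linarith [dist_le_of_mem_csq hx hy])
  · refine mem_cthickening_of_dist_le x z _ T hzT ?_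
    linarith [dist_triangle x y z, dist_le_of_mem_csq hx hy, dist_le_of_mem_csq hy' hz]

theorem tendsto_dyadic_radius (C : ℝ) :
    Tendsto (fun K : ℕ => C * (2 : ℝ) ^ (-(K : ℤ))) atTop (𝓝 0) := by
  have h : Tendsto (fun K : ℕ => (2 : ℝ) ^ (-(K : ℤ))) atTop (𝓝 0) := by
    simp only [zpow_neg, zpow_natCast]
    exact tendsto_inv_atTop_zero.comp (tendsto_pow_atTop_atTop_of_one_lt one_lt_two)
  simpa using h.const_mul C

namespace BVMap

variable {Ω : Set E2}

theorem varA_le_var (F : BVMap Ω) : F.varA ≤ F.var := Measure.withDensity_rnDeriv_le _ _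

instance (F : BVMap Ω) : IsFiniteMeasure F.varA :=
  have := F.var_finite
  isFiniteMeasure_of_le _ F.varA_le_var

theorem varA_le_varA_carrier (F : BVMap Ω) (s : Set E2) : F.varA s ≤ F.varA Ω := by
  have hout : F.varA Ωᶜ = 0 := le_antisymm ((F.varA_le_var _).trans F.var_outside.le) bot_le
  calc F.varA s ≤ F.varA (Ω ∪ Ωᶜ) := measure_mono (by simp)
    _ ≤ F.varA Ω := by simpa [hout] using measure_union_le (μ := F.varA) Ω Ωᶜ

theorem varA_closure_iUnion_osq (F : BVMap Ω) {N : ℕ} (c : Fin N → E2) (r : Fin N → ℝ) :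
    F.varA (closure (⋃ i, osq (c i) (r i))) = F.varA (⋃ i, osq (c i) (r i)) :=
  measure_congr <| (withDensity_absolutelyContinuous _ _).ae_eq <|
    closure_iUnion_ae_eq_of_convex volume fun _ => convex_osq _ _

theorem exists_varA_nearFamSet_le (F : BVMap Q01) {ε : ℝ} (hε : 0 < ε) {N : ℕ}
    (c : Fin N → E2) (r : Fin N → ℝ)
    (h : F.varA (⋃ i, osq (c i) (r i)) ≤ ENNReal.ofReal ε * F.varA Q01) :
    ∃ K : ℕ, F.varA (nearFamSet K (⋃ i, osq (c i) (r i)))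
      ≤ ENNReal.ofReal (2 * ε) * F.varA Q01 := by
  set T := ⋃ i, osq (c i) (r i)
  rcases eq_or_ne (F.varA Q01) 0 with hzero | hne
  · exact ⟨0, by simpa [hzero] using F.varA_le_varA_carrier (nearFamSet 0 T)⟩
  have hclosure : F.varA (closure T) < ENNReal.ofReal (2 * ε) * F.varA Q01 := by
    rw [F.varA_closure_iUnion_osq]
    refine h.trans_lt ((ENNReal.mul_lt_mul_iff_left hne (measure_ne_top _ _)).mpr ?_)
    exact (ENNReal.ofReal_lt_ofReal_iff (by linarith)).mpr (by linarith)
  have hlim := (tendsto_measure_cthickening (μ := F.varA) (s := T)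
    ⟨1, one_pos, measure_ne_top _ _⟩).comp (tendsto_dyadic_radius 6)
  obtain ⟨K, hK⟩ := (hlim.eventually_lt_const hclosure).exists
  exact ⟨K, (measure_mono (nearFamSet_subset_cthickening K T)).trans hK.le⟩

end BVMap

theorem dyadic_isolation_general (F : BVMap Q01) (ε : ℝ) (hε : 0 < ε)
    (N₀ : ℕ) (c : Fin N₀ → E2) (rad : Fin N₀ → ℝ)
    (Ftil : Set E2) (hFtil : Ftil = ⋃ i, osq (c i) (rad i))
    (h1 : F.varA Ftil ≤ ENNReal.ofReal ε * F.varA Q01)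
    (h2 : F.varS (Q01 \ Ftil) ≤ ENNReal.ofReal ε * F.varS Q01)
    (h3 : 0 < F.varA Q01 →
      F.varS (Q01 \ Ftil) ≤ ENNReal.ofReal (ε ^ 2) * F.varA Q01) :
    ∃ α₀ : ℝ, 0 < α₀ ∧ α₀ < ε ∧
      ∀ α : ℝ, 0 < α → α ≤ α₀ →
        ∃ K : ℕ,
          F.varA (nearFamSet K Ftil) ≤ ENNReal.ofReal (2 * ε) * F.varA Q01 ∧
          F.varS (Q01 \ nearFamSet K Ftil) ≤ ENNReal.ofReal ε * F.varS Q01 ∧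
          (0 < F.varA Q01 →
            F.varS (Q01 \ nearFamSet K Ftil) ≤ ENNReal.ofReal (ε ^ 2) * F.varA Q01) := by
  subst hFtil
  obtain ⟨K, hK⟩ := F.exists_varA_nearFamSet_le hε c rad h1
  have hS := measure_mono (μ := F.varS) (Q01_diff_nearFamSet_subset K (⋃ i, osq (c i) (rad i)))
  exact ⟨ε / 2, by positivity, by linarith, fun _ _ _ =>
    ⟨K, hK, hS.trans h2, fun hpos => hS.trans (h3 hpos)⟩⟩

/-- **Dyadic localisation of the isolating set.**  Let `f ∈ BV(Q(0,1))` be an `NCBV` map,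
`ε > 0`, and let `F̃_ε` (a finite union of squares) satisfy the conclusions of the
isolation lemma.  Then there is `0 < α₀ < ε` such that for every `0 < α ≤ α₀` there is
`K = K(ε,α) ∈ ℕ` such that, with `F_{ε,K}` the collection of `K`-dyadic squares meeting
`F̃_ε` or having a neighbour meeting `F̃_ε`, and `F̃_{ε,K}` its union:
(1) `|D^a f|(F̃_{ε,K}) ≤ 2ε|D^a f|(Q(0,1))`, and
(2) `|D^s f|(Q(0,1) \ F̃_{ε,K}) ≤ ε|D^s f|(Q(0,1))`, with moreover
`|D^s f|(Q(0,1) \ F̃_{ε,K}) ≤ ε²|D^a f|(Q(0,1))` when `|D^a f|(Q(0,1)) > 0`. -/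
theorem dyadic_isolation (F : BVMap Q01) (hNC : NCBV F) (ε : ℝ) (hε : 0 < ε)
    (N₀ : ℕ) (c : Fin N₀ → E2) (rad : Fin N₀ → ℝ) (hrad : ∀ i, 0 < rad i)
    (Ftil : Set E2) (hFtil : Ftil = ⋃ i, osq (c i) (rad i))
    (h1 : F.varA Ftil ≤ ENNReal.ofReal ε * F.varA Q01)
    (h2 : F.varS (Q01 \ Ftil) ≤ ENNReal.ofReal ε * F.varS Q01)
    (h3 : 0 < F.varA Q01 →
      F.varS (Q01 \ Ftil) ≤ ENNReal.ofReal (ε ^ 2) * F.varA Q01) :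
    ∃ α₀ : ℝ, 0 < α₀ ∧ α₀ < ε ∧
      ∀ α : ℝ, 0 < α → α ≤ α₀ →
        ∃ K : ℕ,
          F.varA (nearFamSet K Ftil) ≤ ENNReal.ofReal (2 * ε) * F.varA Q01 ∧
          F.varS (Q01 \ nearFamSet K Ftil) ≤ ENNReal.ofReal ε * F.varS Q01 ∧
          (0 < F.varA Q01 →
            F.varS (Q01 \ nearFamSet K Ftil) ≤ ENNReal.ofReal (ε ^ 2) * F.varA Q01) :=
  dyadic_isolation_general F ε hε N₀ c rad Ftil hFtil h1 h2 h3
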